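/- arXiv:1906.10093 — 2 statements merged into one kernel-verified Lean document; each statement's English description precedes it below -/
import Mathlib

section
/- Fix a total order < on S and define the strict order ≪ on S* by: ε ≪ u for every nonempty u ∈ S*, and vs ≪ wt (for v, w ∈ S* and s, t ∈ S) iff |vs| < |wt|, or |vs| = |wt| and s < t, or |vs| = |wt|, s = t and v ≪ w. Let D be a recurrent SCC of B and y ∈ ℝ^D. Let t ∈ S and x ∈ S*, let U ⊆ S* be a finite set of words with u ≪ x for all u ∈ U, and suppose Δ′(t)Δ(x)y = Σ_{u∈U} γ_u Δ′(t)Δ(u)y for some γ_u ∈ ℝ. Then for every s ∈ S and w ∈ S* there exist a finite set U′ ⊆ S* of words with u′ ≪ w t x for all u′ ∈ U′ and coefficients γ′_{u′} ∈ ℝ such that Δ′(s)Δ(w t x)y = Σ_{u′∈U′} γ′_{u′} Δ′(s)Δ(u′)y. -/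
/-!
Every column of `Δ(t)` outside the fibre over `t` vanishes, so `Δ(t) = Δ(t)Δ′(t)` and
`Δ′(s)Δ(w t u) = P Δ′(t)Δ(u)` with `P = Δ′(s)Δ(w)Δ(t)` independent of `u`. Applying `P` to the
given dependency yields one among the words `w t u`, and `u ≪ x` implies `w t u ≪ w t x`
because `≪` compares words from the right.
-/

open Matrix MeasureTheory

attribute [local instance] Classical.propDecidable

/-- A Büchi automaton with state space `Q` and alphabet `A`. -/
structure BA (Q A : Type) where
  delta : Q → A → Set Q
  init : Set Q
  acc : Set Q

namespace BA

variable {Q A : Type}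

/-- A run of the automaton on an infinite word. -/
def InfRun (𝒜 : BA Q A) (w : ℕ → A) (ρ : ℕ → Q) : Prop :=
  ρ 0 ∈ 𝒜.init ∧ ∀ i, ρ (i + 1) ∈ 𝒜.delta (ρ i) (w i)

/-- An accepting run: some accepting state occurs infinitely often. -/
def AccRun (𝒜 : BA Q A) (w : ℕ → A) (ρ : ℕ → Q) : Prop :=
  𝒜.InfRun w ρ ∧ ∃ q ∈ 𝒜.acc, {i : ℕ | ρ i = q}.Infinite

/-- The language of infinite words having at least one accepting run. -/
def Lang (𝒜 : BA Q A) : Set (ℕ → A) := {w | ∃ ρ, 𝒜.AccRun w ρ}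

/-- Unambiguous: every infinite word has at most one accepting run. -/
def Unambiguous (𝒜 : BA Q A) : Prop :=
  ∀ w ρ₁ ρ₂, 𝒜.AccRun w ρ₁ → 𝒜.AccRun w ρ₂ → ρ₁ = ρ₂

/-- `𝒜.IsRun q w ρ r` : the list `ρ` (of length `|w| + 1`) is a run for the
finite word `w` from `q` to `r`. -/
def IsRun (𝒜 : BA Q A) : Q → List A → List Q → Q → Prop
  | q, [], ρ, r => q = r ∧ ρ = [q]
  | q, a :: w, ρ, r => ∃ q' ρ', ρ = q :: ρ' ∧ q' ∈ 𝒜.delta q a ∧ 𝒜.IsRun q' w ρ' r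

/-- A diamond: two distinct runs for the same finite word with the
same start and end states. -/
def HasDiamond (𝒜 : BA Q A) : Prop :=
  ∃ q r w ρ₁ ρ₂, ρ₁ ≠ ρ₂ ∧ 𝒜.IsRun q w ρ₁ r ∧ 𝒜.IsRun q w ρ₂ r

/-- Every state is reachable from some initial state. -/
def AllReachable (𝒜 : BA Q A) : Prop :=
  ∀ q, ∃ q₀ ∈ 𝒜.init, ∃ w ρ, 𝒜.IsRun q₀ w ρ q

/-- The automaton `𝒜` with `q` as the only initial state. -/
def fromState (𝒜 : BA Q A) (q : Q) : BA Q A := { 𝒜 with init := {q} }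

/-- `|δ|`: the number of pairs `(q, r)` such that `r ∈ δ(q, a)` for some letter `a`. -/
noncomputable def numTrans (𝒜 : BA Q A) : ℕ := {p : Q × Q | ∃ a, p.2 ∈ 𝒜.delta p.1 a}.ncard

end BA

/-- A (row-)stochastic matrix with nonnegative entries. -/
def IsMarkov {S : Type} [Fintype S] (M : Matrix S S ℝ) : Prop :=
  (∀ s t, 0 ≤ M s t) ∧ ∀ s, ∑ t, M s t = 1

/-- `Pr s` is the probability measure of the Markov chain `M` started at `s`:
the cylinder of the finite sequence `u 0, …, u n` has measure
`M (u 0) (u 1) ⋯ M (u (n-1)) (u n)` if `u 0 = s`, and `0` otherwise. -/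
def CylinderSpec {S : Type} [Fintype S] [MeasurableSpace S]
    (M : Matrix S S ℝ) (Pr : S → Measure (ℕ → S)) : Prop :=
  ∀ (s : S) (n : ℕ) (u : ℕ → S),
    Pr s {ω | ∀ i ≤ n, ω i = u i} =
      if u 0 = s then ENNReal.ofReal (∏ i ∈ Finset.range n, M (u i) (u (i + 1))) else 0

/-- The vector `z`, given by `z ⟨q, s⟩ = Pr_s (L(𝒜_q))`. -/
noncomputable def zvec {Q S : Type} [MeasurableSpace S]
    (𝒜 : BA Q S) (Pr : S → Measure (ℕ → S)) : Q × S → ℝ :=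
  fun p => ((Pr p.2) ((𝒜.fromState p.1).Lang)).toReal

/-- The matrix `B` built from the automaton `𝒜` and the Markov chain `M`. -/
noncomputable def Bmat {Q S : Type} (𝒜 : BA Q S) (M : Matrix S S ℝ) :
    Matrix (Q × S) (Q × S) ℝ :=
  Matrix.of fun p p' => if p'.1 ∈ 𝒜.delta p.1 p.2 then M p.2 p'.2 else 0

/-- The spectral radius of a real square matrix: the largest absolute value of
its complex eigenvalues. -/
noncomputable def specRad {n : Type} [Fintype n] [DecidableEq n] (N : Matrix n n ℝ) : ℝ :=
  sSup {x : ℝ | ∃ c ∈ spectrum ℂ (N.map Complex.ofReal), x = ‖c‖}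

/-- `D` is a strongly connected component of the graph of the nonnegative matrix `N`
(edges are the positive entries). -/
def IsSCC {V : Type} (N : Matrix V V ℝ) (D : Set V) : Prop :=
  ∃ v, D = {w | Relation.ReflTransGen (fun a b => 0 < N a b) v w ∧
               Relation.ReflTransGen (fun a b => 0 < N a b) w v}

/-- The submatrix `N_{D,D}`. -/
def subMat {V : Type} (N : Matrix V V ℝ) (D : Set V) : Matrix ↥D ↥D ℝ :=
  N.submatrix (Subtype.val) (Subtype.val)

/-- An SCC `D` of `B` is recurrent if `ρ(B_{D,D}) = 1`. -/
def RecurrentSCC {Q S : Type} [Fintype Q] [Fintype S]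
    (𝒜 : BA Q S) (M : Matrix S S ℝ) (D : Set (Q × S)) : Prop :=
  specRad (subMat (Bmat 𝒜 M) D) = 1

/-- An SCC `D` of `B` is accepting if it contains a pair `⟨q, s⟩` with `q` accepting. -/
def AcceptingSCC {Q S : Type} (𝒜 : BA Q S) (D : Set (Q × S)) : Prop :=
  ∃ p ∈ D, p.1 ∈ 𝒜.acc

/-- One step of the fibre operation: `f ⇒ t`. -/
def fibStep {Q S : Type} (𝒜 : BA Q S) (D : Set (Q × S)) (f : Set (Q × S)) (t : S) :
    Set (Q × S) :=
  {p ∈ D | p.2 = t ∧ ∃ e ∈ f, p.1 ∈ 𝒜.delta e.1 e.2}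

/-- The fibre operation along a word: `f ⇒ w`. -/
def fibRun {Q S : Type} (𝒜 : BA Q S) (D : Set (Q × S)) (f : Set (Q × S)) :
    List S → Set (Q × S)
  | [] => f
  | t :: w => fibRun 𝒜 D (fibStep 𝒜 D f t) w

/-- A word `s₁ ⋯ sₙ` is enabled if `M_{sᵢ, sᵢ₊₁} > 0` for all `i < n`. -/
def Enabled {S : Type} (M : Matrix S S ℝ) (l : List S) : Prop :=
  l.Chain' fun a b => 0 < M a b

/-- `c` is a cut: `c = d ⇒ v` for some `d ∈ D` and enabled `v`, and `c ⇒ w`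
is nonempty for every `w` for which it is defined. -/
def IsCut {Q S : Type} (𝒜 : BA Q S) (M : Matrix S S ℝ) (D : Set (Q × S))
    (c : Set (Q × S)) : Prop :=
  ∃ d ∈ D, ∃ v : List S, Enabled M (d.2 :: v) ∧ c = fibRun 𝒜 D {d} v ∧
    ∀ w : List S, Enabled M (v.getLastD d.2 :: w) → fibRun 𝒜 D c w ≠ ∅

/-- The co-reachability set `Co(d)`: those `e ∈ D` with `{d, e} ⊆ d ⇒ w` for some `w`. -/
def Co {Q S : Type} (𝒜 : BA Q S) (M : Matrix S S ℝ) (D : Set (Q × S)) (d : Q × S) :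
    Set (Q × S) :=
  {e ∈ D | ∃ w : List S, Enabled M (d.2 :: w) ∧
    d ∈ fibRun 𝒜 D {d} w ∧ e ∈ fibRun 𝒜 D {d} w}

/-- The matrix `Δ(t)` over `D`. -/
noncomputable def Delta {Q S : Type} (𝒜 : BA Q S) (M : Matrix S S ℝ) (D : Set (Q × S))
    (t : S) : Matrix ↥D ↥D ℝ :=
  Matrix.of fun p p' =>
    if (p' : Q × S).2 = t ∧ 0 < M (p : Q × S).2 t ∧
       (p' : Q × S).1 ∈ 𝒜.delta (p : Q × S).1 (p : Q × S).2
    then 1 else 0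

/-- The matrix `Δ(w)` for a word `w` (`Δ(ε)` is the identity). -/
noncomputable def DeltaW {Q S : Type} [Fintype Q] [Fintype S]
    (𝒜 : BA Q S) (M : Matrix S S ℝ) (D : Set (Q × S)) : List S → Matrix ↥D ↥D ℝ
  | [] => 1
  | t :: w => Delta 𝒜 M D t * DeltaW 𝒜 M D w

/-- The matrix `Δ′(t)` over `D`. -/
noncomputable def Delta' {Q S : Type} (D : Set (Q × S)) (t : S) : Matrix ↥D ↥D ℝ :=
  Matrix.of fun p p' => if p = p' ∧ (p : Q × S).2 = t then 1 else 0

/-- The vector space `V(s)` spanned by the vectors `Δ′(s) Δ(w) y` for all words `w`. -/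
noncomputable def Vspace {Q S : Type} [Fintype Q] [Fintype S]
    (𝒜 : BA Q S) (M : Matrix S S ℝ) (D : Set (Q × S)) (y : ↥D → ℝ) (s : S) :
    Submodule ℝ (↥D → ℝ) :=
  Submodule.span ℝ {x : ↥D → ℝ | ∃ w : List S, x = (Delta' D s * DeltaW 𝒜 M D w).mulVec y}

/-- A vector `μ ∈ ℝ^D` is a fibre over `s` if it vanishes outside `Q × {s}`. -/
def IsFibreVec {Q S : Type} (D : Set (Q × S)) (μ : ↥D → ℝ) (s : S) : Prop :=
  ∀ p : ↥D, (p : Q × S).2 ≠ s → μ p = 0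

/-- A pseudo-cut over `s` (with respect to the vector `zD`): a fibre `μ` over `s` with
`μᵀ Δ(w) zD = μᵀ zD` for all `w` such that `s w` is enabled. -/
def IsPseudoCut {Q S : Type} [Fintype Q] [Fintype S]
    (𝒜 : BA Q S) (M : Matrix S S ℝ) (D : Set (Q × S)) (zD : ↥D → ℝ)
    (μ : ↥D → ℝ) (s : S) : Prop :=
  IsFibreVec D μ s ∧
  ∀ w : List S, Enabled M (s :: w) → μ ⬝ᵥ (DeltaW 𝒜 M D w).mulVec zD = μ ⬝ᵥ zD

/-- A `Co(d)`-pseudo-cut: a pseudo-cut over `d.2` that is nonzero at `d` and vanishes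
outside `Co(d)`. -/
def IsCoPseudoCut {Q S : Type} [Fintype Q] [Fintype S]
    (𝒜 : BA Q S) (M : Matrix S S ℝ) (D : Set (Q × S)) (zD : ↥D → ℝ)
    (d : Q × S) (hd : d ∈ D) (μ : ↥D → ℝ) : Prop :=
  IsPseudoCut 𝒜 M D zD μ d.2 ∧ μ ⟨d, hd⟩ ≠ 0 ∧
  ∀ e : ↥D, (e : Q × S) ∉ Co 𝒜 M D d → μ e = 0

/-- Auxiliary order: shortlex on reversed words. -/
def revLT {S : Type} [LinearOrder S] : List S → List S → Prop
  | [], u => u ≠ []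
  | _ :: _, [] => False
  | a :: v, b :: w =>
      (a :: v).length < (b :: w).length ∨
      ((a :: v).length = (b :: w).length ∧ (a < b ∨ (a = b ∧ revLT v w)))

/-- The order `≪` on words: shortlex, but with words read from right to left. -/
def wordLT {S : Type} [LinearOrder S] (u v : List S) : Prop :=
  revLT u.reverse v.reverse

section WordOrder

variable {S : Type} [LinearOrder S]

lemma revLT_of_length_lt {v w : List S} (h : v.length < w.length) : revLT v w := by
  cases v with
  | nil => cases w with
    | nil => simp at h
    | cons b w' => simp [revLT]
  | cons a v' => cases w with
    | nil => simp at h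
    | cons b w' => exact Or.inl h

lemma revLT.append_right (z : List S) {v w : List S} (h : revLT v w) :
    revLT (v ++ z) (w ++ z) := by
  induction v generalizing w with
  | nil =>
    cases w with
    | nil => simp [revLT] at h
    | cons b w' => exact revLT_of_length_lt (by simp)
  | cons a v' ih =>
    cases w with
    | nil => simp [revLT] at h
    | cons b w' =>
      rcases h with hlt | ⟨hlen, hhead⟩
      · exact revLT_of_length_lt (by simpa using hlt)
      · refine Or.inr ⟨by simpa using hlen, ?_⟩
        rcases hhead with hab | ⟨rfl, htail⟩
        · exact Or.inl hab
        · exact Or.inr ⟨rfl, ih htail⟩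

lemma wordLT.append_left (v : List S) {u x : List S} (h : wordLT u x) :
    wordLT (v ++ u) (v ++ x) := by
  simpa [wordLT] using h.append_right v.reverse

end WordOrder

section DeltaMatrices

variable {Q S : Type} [Fintype Q] [Fintype S] (𝒜 : BA Q S) (M : Matrix S S ℝ) (D : Set (Q × S))

lemma DeltaW_append (v w : List S) :
    DeltaW 𝒜 M D (v ++ w) = DeltaW 𝒜 M D v * DeltaW 𝒜 M D w := by
  induction v with
  | nil => simp [DeltaW]
  | cons a v ih => simp [DeltaW, ih, Matrix.mul_assoc]

lemma Delta_mul_Delta'_self (t : S) : Delta 𝒜 M D t * Delta' D t = Delta 𝒜 M D t := by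
  ext p p'
  rw [Matrix.mul_apply, Finset.sum_eq_single p']
  · by_cases h : (p' : Q × S).2 = t <;> simp [Delta, Delta', h]
  · intro k _ hk
    simp [Delta', hk]
  · simp

lemma Delta'_mul_DeltaW_append_cons (s t : S) (w u : List S) :
    Delta' D s * DeltaW 𝒜 M D (w ++ t :: u) =
      (Delta' D s * DeltaW 𝒜 M D w * Delta 𝒜 M D t) * (Delta' D t * DeltaW 𝒜 M D u) := by
  simp only [DeltaW_append, DeltaW, Matrix.mul_assoc]
  rw [← Matrix.mul_assoc (Delta 𝒜 M D t), Delta_mul_Delta'_self]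

end DeltaMatrices

theorem stmt_12_general {Q S : Type} [Fintype Q] [Fintype S] [LinearOrder S]
    (𝒜 : BA Q S) (M : Matrix S S ℝ)
    (D : Set (Q × S))
    (y : ↥D → ℝ)
    (t : S) (x : List S)
    (U : Finset (List S)) (hU : ∀ u ∈ U, wordLT u x)
    (γ : List S → ℝ)
    (hrep : (Delta' D t * DeltaW 𝒜 M D x).mulVec y =
      ∑ u ∈ U, γ u • (Delta' D t * DeltaW 𝒜 M D u).mulVec y) :
    ∀ (s : S) (w : List S),
      ∃ (U' : Finset (List S)) (γ' : List S → ℝ),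
        (∀ u' ∈ U', wordLT u' (w ++ t :: x)) ∧
        (Delta' D s * DeltaW 𝒜 M D (w ++ t :: x)).mulVec y =
          ∑ u' ∈ U', γ' u' • (Delta' D s * DeltaW 𝒜 M D u').mulVec y := by
  intro s w
  have hinj : Set.InjOn (fun u : List S => w ++ t :: u) U := fun u₁ _ u₂ _ h =>
    List.cons_injective (List.append_cancel_left h)
  have hdrop (u : List S) : (w ++ t :: u).drop (w.length + 1) = u := by
    rw [← List.singleton_append, ← List.append_assoc]
    exact List.drop_left' (by simp)
  refine ⟨U.image (w ++ t :: ·), fun u' => γ (u'.drop (w.length + 1)), ?_, ?_⟩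
  · simp only [Finset.mem_image, forall_exists_index, and_imp, forall_apply_eq_imp_iff₂]
    intro u hu
    simpa using (hU u hu).append_left (w ++ [t])
  · rw [Finset.sum_image hinj, Delta'_mul_DeltaW_append_cons, ← Matrix.mulVec_mulVec, hrep,
      Matrix.mulVec_sum]
    refine Finset.sum_congr rfl fun u _ => ?_
    simp only [hdrop]
    rw [Delta'_mul_DeltaW_append_cons, Matrix.mulVec_smul, Matrix.mulVec_mulVec]

/-- pushing a linear dependency of `Δ′(t)Δ(x)y` on `≪`-smaller words
through to `Δ′(s)Δ(w t x)y`. -/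
theorem stmt_12 {Q S : Type} [Fintype Q] [Fintype S] [LinearOrder S]
    (𝒜 : BA Q S) (M : Matrix S S ℝ) (hM : IsMarkov M)
    (D : Set (Q × S)) (hD : IsSCC (Bmat 𝒜 M) D) (hrec : RecurrentSCC 𝒜 M D)
    (y : ↥D → ℝ)
    (t : S) (x : List S)
    (U : Finset (List S)) (hU : ∀ u ∈ U, wordLT u x)
    (γ : List S → ℝ)
    (hrep : (Delta' D t * DeltaW 𝒜 M D x).mulVec y =
      ∑ u ∈ U, γ u • (Delta' D t * DeltaW 𝒜 M D u).mulVec y) :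
    ∀ (s : S) (w : List S),
      ∃ (U' : Finset (List S)) (γ' : List S → ℝ),
        (∀ u' ∈ U', wordLT u' (w ++ t :: x)) ∧
        (Delta' D s * DeltaW 𝒜 M D (w ++ t :: x)).mulVec y =
          ∑ u' ∈ U', γ' u' • (Delta' D s * DeltaW 𝒜 M D u').mulVec y :=
  stmt_12_general 𝒜 M D y t x U hU γ hrep
end

section
/- Every SCC D of B satisfies ρ(B_{D,D}) ≤ 1, where ρ denotes the spectral radius. -/
open Matrix MeasureTheory

attribute [local instance] Classical.propDecidable

/-! Without diamonds, two states are joined by at most one run on any given word. Hence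
`(Bⁿ)_{⟨q,s⟩,⟨q',s'⟩}`, which weighs each path `s → s'` of length `n` of the chain by its
probability times the number of runs from `q` to `q'` along it, is at most `(Mⁿ)_{s,s'} ≤ 1`.
The powers of the nonnegative submatrix `B_{D,D}` are entrywise dominated by those of `B`, so
they stay bounded; so `|c|ⁿ` is bounded in `n` for every complex eigenvalue `c` of `B_{D,D}`,
which forces `|c| ≤ 1`. -/

open scoped NNReal

namespace BA

variable {Q A : Type} (𝒜 : BA Q A)

def CanMeet (q₁ q₂ : Q) : Prop :=
  ∃ w r ρ₁ ρ₂, 𝒜.IsRun q₁ w ρ₁ r ∧ 𝒜.IsRun q₂ w ρ₂ r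

variable {𝒜}

lemma IsRun.head?_eq {q r : Q} {w : List A} {ρ : List Q} (h : 𝒜.IsRun q w ρ r) :
    ρ.head? = some q := by
  cases w with
  | nil => obtain ⟨-, rfl⟩ := h; rfl
  | cons a w => obtain ⟨-, -, rfl, -⟩ := h; rfl

lemma canMeet_refl (q : Q) : 𝒜.CanMeet q q :=
  ⟨[], q, [q], [q], ⟨rfl, rfl⟩, ⟨rfl, rfl⟩⟩

lemma CanMeet.of_mem_delta {p₁ p₂ q₁ q₂ : Q} {a : A} (h₁ : q₁ ∈ 𝒜.delta p₁ a)
    (h₂ : q₂ ∈ 𝒜.delta p₂ a) (h : 𝒜.CanMeet q₁ q₂) : 𝒜.CanMeet p₁ p₂ := by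
  obtain ⟨w, r, ρ₁, ρ₂, hr₁, hr₂⟩ := h
  exact ⟨a :: w, r, p₁ :: ρ₁, p₂ :: ρ₂, ⟨q₁, ρ₁, rfl, h₁, hr₁⟩, ⟨q₂, ρ₂, rfl, h₂, hr₂⟩⟩

lemma not_canMeet_of_mem_delta (hND : ¬ 𝒜.HasDiamond) {p q₁ q₂ : Q} {a : A}
    (h₁ : q₁ ∈ 𝒜.delta p a) (h₂ : q₂ ∈ 𝒜.delta p a) (hne : q₁ ≠ q₂) : ¬ 𝒜.CanMeet q₁ q₂ := by
  rintro ⟨w, r, ρ₁, ρ₂, hr₁, hr₂⟩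
  refine hND ⟨p, r, a :: w, p :: ρ₁, p :: ρ₂, fun h => hne ?_,
    ⟨q₁, ρ₁, rfl, h₁, hr₁⟩, ⟨q₂, ρ₂, rfl, h₂, hr₂⟩⟩
  have hρ := congrArg List.head? (List.cons.inj h).2
  rw [hr₁.head?_eq, hr₂.head?_eq] at hρ
  exact Option.some.inj hρ

variable [Fintype Q]

lemma pairwiseDisjoint_delta_of_pairwise {T : Set Q} (hT : T.Pairwise (¬ 𝒜.CanMeet · ·))
    (a : A) : T.PairwiseDisjoint fun p => (𝒜.delta p a).toFinset :=
  fun _ h₁ _ h₂ hne => Finset.disjoint_left.2 fun q hq₁ hq₂ =>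
    hT h₁ h₂ hne ((canMeet_refl q).of_mem_delta (Set.mem_toFinset.1 hq₁) (Set.mem_toFinset.1 hq₂))

lemma pairwise_not_canMeet_biUnion_delta (hND : ¬ 𝒜.HasDiamond) {T : Finset Q}
    (hT : (T : Set Q).Pairwise (¬ 𝒜.CanMeet · ·)) (a : A) :
    (T.biUnion fun p => (𝒜.delta p a).toFinset : Set Q).Pairwise (¬ 𝒜.CanMeet · ·) := by
  intro q₁ h₁ q₂ h₂ hne hmeet
  simp only [Finset.coe_biUnion, Finset.mem_coe, Set.mem_toFinset, Set.mem_iUnion,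
    exists_prop] at h₁ h₂
  obtain ⟨p₁, hp₁, hq₁⟩ := h₁
  obtain ⟨p₂, hp₂, hq₂⟩ := h₂
  by_cases hp : p₁ = p₂
  · subst hp
    exact not_canMeet_of_mem_delta hND hq₁ hq₂ hne hmeet
  · exact hT hp₁ hp₂ hp (hmeet.of_mem_delta hq₁ hq₂)

end BA

lemma IsMarkov.mem_rowStochastic {S : Type} [Fintype S] {M : Matrix S S ℝ} (hM : IsMarkov M) :
    M ∈ rowStochastic ℝ S :=
  mem_rowStochastic_iff_sum.2 hM

lemma Matrix.submatrix_pow_apply_le {ι V R : Type} [Fintype ι] [Fintype V] [DecidableEq ι]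
    [DecidableEq V] [Semiring R] [PartialOrder R] [IsOrderedRing R] {B : Matrix V V R}
    (hB : ∀ i j, 0 ≤ B i j) (e : ι ↪ V) (n : ℕ) (i j : ι) :
    (B.submatrix e e ^ n) i j ≤ (B ^ n) (e i) (e j) := by
  induction n generalizing i with
  | zero => rw [pow_zero, pow_zero, ← submatrix_one_embedding e]; rfl
  | succ n ih =>
    rw [pow_succ', pow_succ', mul_apply, mul_apply]
    calc ∑ k, B.submatrix e e i k * (B.submatrix e e ^ n) k j
        ≤ ∑ k, B (e i) (e k) * (B ^ n) (e k) (e j) :=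
          Finset.sum_le_sum fun k _ => mul_le_mul_of_nonneg_left (ih k) (hB _ _)
      _ = ∑ v ∈ Finset.univ.map e, B (e i) v * (B ^ n) v (e j) :=
          (Finset.sum_map Finset.univ e fun v => B (e i) v * (B ^ n) v (e j)).symm
      _ ≤ ∑ v, B (e i) v * (B ^ n) v (e j) :=
          Finset.sum_le_univ_sum_of_nonneg fun v => mul_nonneg (hB _ _) (pow_apply_nonneg hB n _ _)

section LinftyOpNorm

attribute [local instance] Matrix.linftyOpSeminormedAddCommGroup Matrix.linftyOpNormedRing
  Matrix.linftyOpNormedAlgebra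

lemma Matrix.linfty_opNNNorm_le_card_mul {m n α : Type} [Fintype m] [Fintype n]
    [SeminormedAddCommGroup α] (A : Matrix m n α) {C : ℝ≥0} (hA : ∀ i j, ‖A i j‖₊ ≤ C) :
    ‖A‖₊ ≤ Fintype.card n * C := by
  rw [linfty_opNNNorm_def]
  exact Finset.sup_le fun i _ => (Finset.sum_le_sum fun j _ => hA i j).trans (by simp)

lemma norm_le_one_of_mem_spectrum_of_pow_bounded {n : Type} [Fintype n] [DecidableEq n]
    (N : Matrix n n ℝ) {C : ℝ≥0} (hN : ∀ k i j, ‖(N ^ k) i j‖₊ ≤ C) {c : ℂ}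
    (hc : c ∈ spectrum ℂ (N.map Complex.ofReal)) : ‖c‖ ≤ 1 := by
  have hpow : ∀ k : ℕ, ‖c‖ ^ k ≤ Fintype.card n * C * ‖(1 : Matrix n n ℂ)‖ := by
    intro k
    have hk := spectrum.norm_le_norm_mul_of_mem (spectrum.pow_mem_pow _ k hc)
    rw [norm_pow] at hk
    refine hk.trans (mul_le_mul_of_nonneg_right ?_ (norm_nonneg _))
    have hmap : N.map Complex.ofReal ^ k = (N ^ k).map Complex.ofReal :=
      (map_pow Complex.ofRealHom.mapMatrix N k).symm
    rw [hmap, ← coe_nnnorm]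
    exact_mod_cast Matrix.linfty_opNNNorm_le_card_mul _ fun i j => by simpa using hN k i j
  by_contra! h
  obtain ⟨k, hk⟩ := pow_unbounded_of_one_lt (Fintype.card n * C * ‖(1 : Matrix n n ℂ)‖) h
  exact (hpow k).not_gt hk

lemma specRad_le_one_of_pow_bounded {n : Type} [Fintype n] [DecidableEq n] (N : Matrix n n ℝ)
    {C : ℝ≥0} (hN : ∀ k i j, ‖(N ^ k) i j‖₊ ≤ C) : specRad N ≤ 1 :=
  Real.sSup_le (by rintro _ ⟨c, hc, rfl⟩; exact norm_le_one_of_mem_spectrum_of_pow_bounded N hN hc)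
    zero_le_one

end LinftyOpNorm

section Bmat

variable {Q S : Type} {𝒜 : BA Q S} {M : Matrix S S ℝ}

lemma bmat_apply_nonneg (hM : ∀ s t, 0 ≤ M s t) (p p' : Q × S) : 0 ≤ Bmat 𝒜 M p p' := by
  simp only [Bmat, of_apply]
  split_ifs
  exacts [hM _ _, le_rfl]

variable [Fintype Q] [Fintype S]

lemma bmat_pow_succ_apply (n : ℕ) (q q' : Q) (s s' : S) :
    (Bmat 𝒜 M ^ (n + 1)) (q, s) (q', s') =
      ∑ t, M s t * ∑ r ∈ (𝒜.delta q s).toFinset, (Bmat 𝒜 M ^ n) (r, t) (q', s') := by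
  rw [pow_succ', mul_apply, Fintype.sum_prod_type, Finset.sum_comm]
  refine Finset.sum_congr rfl fun t _ => ?_
  simp [Bmat, Finset.mul_sum, ite_mul, Finset.sum_ite, Set.filter_mem_univ_eq_toFinset]

/- A single start state is generalised to a set `T` of states no two of which can meet: the
successors of `T` under a letter are then pairwise disjoint and again form such a set. -/
lemma sum_bmat_pow_apply_le (hM : IsMarkov M) (hND : ¬ 𝒜.HasDiamond) (n : ℕ) (T : Finset Q)
    (hT : (T : Set Q).Pairwise (¬ 𝒜.CanMeet · ·)) (s s' : S) (q' : Q) :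
    ∑ q ∈ T, (Bmat 𝒜 M ^ n) (q, s) (q', s') ≤ (M ^ n) s s' := by
  induction n generalizing T s with
  | zero =>
    calc ∑ q ∈ T, (1 : Matrix (Q × S) (Q × S) ℝ) (q, s) (q', s')
        ≤ ∑ q, (1 : Matrix (Q × S) (Q × S) ℝ) (q, s) (q', s') :=
          Finset.sum_le_univ_sum_of_nonneg fun q => by rw [one_apply]; split_ifs <;> simp
      _ = (1 : Matrix S S ℝ) s s' := by by_cases h : s = s' <;> simp [one_apply, h]
  | succ n ih =>
    calc ∑ q ∈ T, (Bmat 𝒜 M ^ (n + 1)) (q, s) (q', s')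
        = ∑ t, M s t * ∑ r ∈ T.biUnion fun p => (𝒜.delta p s).toFinset,
            (Bmat 𝒜 M ^ n) (r, t) (q', s') := by
          simp_rw [bmat_pow_succ_apply,
            Finset.sum_biUnion (𝒜.pairwiseDisjoint_delta_of_pairwise hT s), Finset.mul_sum]
          exact Finset.sum_comm
      _ ≤ ∑ t, M s t * (M ^ n) t s' :=
          Finset.sum_le_sum fun t _ => mul_le_mul_of_nonneg_left
            (ih _ (𝒜.pairwise_not_canMeet_biUnion_delta hND hT s) t) (hM.1 s t)
      _ = (M ^ (n + 1)) s s' := by rw [pow_succ', mul_apply]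

lemma bmat_pow_apply_le (hM : IsMarkov M) (hND : ¬ 𝒜.HasDiamond) (n : ℕ) (p p' : Q × S) :
    (Bmat 𝒜 M ^ n) p p' ≤ (M ^ n) p.2 p'.2 := by
  simpa using sum_bmat_pow_apply_le hM hND n {p.1} (by simp) p.2 p'.2 p'.1

lemma nnnorm_subMat_bmat_pow_apply_le_one (hM : IsMarkov M) (hND : ¬ 𝒜.HasDiamond)
    (D : Set (Q × S)) (k : ℕ) (i j : D) : ‖(subMat (Bmat 𝒜 M) D ^ k) i j‖₊ ≤ 1 := by
  have hB : ∀ p p', 0 ≤ Bmat 𝒜 M p p' := bmat_apply_nonneg hM.1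
  have hle : (subMat (Bmat 𝒜 M) D ^ k) i j ≤ 1 :=
    calc (subMat (Bmat 𝒜 M) D ^ k) i j
        ≤ (Bmat 𝒜 M ^ k) i j := submatrix_pow_apply_le hB (Function.Embedding.subtype _) k i j
      _ ≤ (M ^ k) i.1.2 j.1.2 := bmat_pow_apply_le hM hND k i j
      _ ≤ 1 := le_one_of_mem_rowStochastic (pow_mem hM.mem_rowStochastic k)
  have h0 : 0 ≤ (subMat (Bmat 𝒜 M) D ^ k) i j := pow_apply_nonneg (fun _ _ => hB _ _) k i j
  rwa [← NNReal.coe_le_coe, coe_nnnorm, NNReal.coe_one, Real.norm_of_nonneg h0]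

end Bmat

theorem stmt_15_general {Q S : Type} [Fintype Q] [Fintype S]
    (𝒜 : BA Q S) (M : Matrix S S ℝ) (hM : IsMarkov M)
    (hND : ¬ 𝒜.HasDiamond) :
    ∀ D : Set (Q × S), IsSCC (Bmat 𝒜 M) D →
      specRad (subMat (Bmat 𝒜 M) D) ≤ 1 :=
  fun D _ => specRad_le_one_of_pow_bounded _ (nnnorm_subMat_bmat_pow_apply_le_one hM hND D)

/-- every SCC `D` of `B` satisfies `ρ(B_{D,D}) ≤ 1`. -/
theorem stmt_15 {Q S : Type} [Fintype Q] [Fintype S]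
    (𝒜 : BA Q S) (M : Matrix S S ℝ) (hM : IsMarkov M)
    (hU : 𝒜.Unambiguous) (hND : ¬ 𝒜.HasDiamond) (hAR : 𝒜.AllReachable) :
    ∀ D : Set (Q × S), IsSCC (Bmat 𝒜 M) D →
      specRad (subMat (Bmat 𝒜 M) D) ≤ 1 :=
  stmt_15_general 𝒜 M hM hND
end
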